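/- Let E be a homogeneous Moran set determined by a collection of closed intervals fulfilling the homogeneous Moran structure for the sequences {n_k} and {c_k}. If sup_{k≥1} n_k < +∞, then dim_A E ≥ limsup_{l→∞} sup_{k≥1} ( log(n_{k+1}n_{k+2}⋯n_{k+l}) / (−log(c_{k+1}c_{k+2}⋯c_{k+l})) ). -/

import Mathlib

open Metric Filter Set
open scoped ENNReal

/-- `coveringNumber r A` is the smallest number of balls of radius `r`
needed to cover `A` (as an extended nonnegative real, `⊤` if no finite cover exists). -/
noncomputable def coveringNumber {X : Type*} [MetricSpace X] (r : ℝ) (A : Set X) : ℝ≥0∞ :=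
  sInf {m : ℝ≥0∞ | ∃ S : Finset X, (S.card : ℝ≥0∞) = m ∧ A ⊆ ⋃ y ∈ S, Metric.ball y r}

/-- The Assouad dimension of a set `F` in a metric space. -/
noncomputable def assouadDim {X : Type*} [MetricSpace X] (F : Set X) : ℝ :=
  sInf {s : ℝ | 0 ≤ s ∧ ∃ b > (0 : ℝ), ∃ C > (0 : ℝ), ∀ r R : ℝ, 0 < r → r < R → R < b →
    ∀ x ∈ F, coveringNumber r (Metric.ball x R ∩ F) ≤ ENNReal.ofReal (C * (R / r) ^ s)}

/-- A word `σ = σ₁σ₂⋯σₖ ∈ Ωₖ`: its `j`-th letter (0-indexed `j`) satisfies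
`1 ≤ σⱼ₊₁ ≤ n (j+1)`. -/
def MoranWord (n : ℕ → ℕ) (σ : List ℕ) : Prop :=
  ∀ j, j < σ.length → 1 ≤ σ.getD j 0 ∧ σ.getD j 0 ≤ n (j + 1)

/-- A collection of closed intervals of `[0,1]` fulfilling the homogeneous Moran
structure for the sequences `{nₖ}` and `{cₖ}`. -/
structure HomMoranStructure (n : ℕ → ℕ) (c : ℕ → ℝ) where
  I : List ℕ → Set ℝ
  root : I [] = Set.Icc 0 1
  isClosedInterval : ∀ σ, MoranWord n σ → ∃ x y : ℝ, x ≤ y ∧ I σ = Set.Icc x y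
  subset : ∀ σ, MoranWord n σ → ∀ i, 1 ≤ i → i ≤ n (σ.length + 1) → I (σ ++ [i]) ⊆ I σ
  disj : ∀ σ, MoranWord n σ → ∀ i₁ i₂, 1 ≤ i₁ → i₁ < i₂ → i₂ ≤ n (σ.length + 1) →
    interior (I (σ ++ [i₁])) ∩ interior (I (σ ++ [i₂])) = ∅
  ratio : ∀ σ, MoranWord n σ → ∀ i, 1 ≤ i → i ≤ n (σ.length + 1) →
    Metric.diam (I (σ ++ [i])) = c (σ.length + 1) * Metric.diam (I σ)

/-- The homogeneous Moran set `E = ⋂_{k≥1} ⋃_{σ∈Ωₖ} I_σ` determined by a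
homogeneous Moran structure. -/
def moranSet {n : ℕ → ℕ} {c : ℕ → ℝ} (S : HomMoranStructure n c) : Set ℝ :=
  ⋂ k : ℕ, ⋃ σ : List ℕ, ⋃ _ : MoranWord n σ ∧ σ.length = k + 1, S.I σ

/-- `moranDelta c k = c₁c₂⋯cₖ`, with `moranDelta c 0 = 1`. -/
noncomputable def moranDelta (c : ℕ → ℝ) (k : ℕ) : ℝ :=
  ∏ i ∈ Finset.Icc 1 k, c i

/-- `moranRatio n c k l = log(n_{k+1}⋯n_{k+l}) / (−log(c_{k+1}⋯c_{k+l}))`. -/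
noncomputable def moranRatio (n : ℕ → ℕ) (c : ℕ → ℝ) (k l : ℕ) : ℝ :=
  Real.log (∏ i ∈ Finset.Icc (k + 1) (k + l), (n i : ℝ)) /
    (-Real.log (∏ i ∈ Finset.Icc (k + 1) (k + l), c i))


section Lemmas
open MeasureTheory

lemma mw_nil (n : ℕ → ℕ) : MoranWord n [] := by intro j hj; simp at hj

lemma mw_prefix {n : ℕ → ℕ} {σ τ : List ℕ} (h : MoranWord n (σ ++ τ)) : MoranWord n σ := by
  intro j hj
  have := h j (by simp; omega)
  rwa [List.getD_append _ _ _ _ hj] at this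

lemma mw_concat {n : ℕ → ℕ} {σ : List ℕ} {i : ℕ} (h : MoranWord n σ)
    (h1 : 1 ≤ i) (h2 : i ≤ n (σ.length + 1)) : MoranWord n (σ ++ [i]) := by
  intro j hj
  simp only [List.length_append, List.length_singleton] at hj
  rcases lt_or_eq_of_le (Nat.lt_succ_iff.mp hj) with hlt | heq
  · rw [List.getD_append _ _ _ _ hlt]; exact h j hlt
  · subst heq
    rw [List.getD_append_right _ _ _ _ (le_refl _)]
    simpa using ⟨h1, h2⟩

lemma mw_last {n : ℕ → ℕ} {σ : List ℕ} {i : ℕ} (h : MoranWord n (σ ++ [i])) :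
    1 ≤ i ∧ i ≤ n (σ.length + 1) := by
  have := h σ.length (by simp)
  rwa [List.getD_append_right _ _ _ _ (le_refl _), Nat.sub_self] at this

lemma mw_replicate {n : ℕ → ℕ} (hn : ∀ k, 1 ≤ k → 2 ≤ n k) (σ : List ℕ)
    (h : MoranWord n σ) (j : ℕ) : MoranWord n (σ ++ List.replicate j 1) := by
  induction j with
  | zero => simpa using h
  | succ j ih =>
    rw [List.replicate_succ', ← List.append_assoc]
    exact mw_concat ih le_rfl (le_trans (by norm_num) (hn _ (Nat.succ_le_succ (Nat.zero_le _))))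

variable {n : ℕ → ℕ} {c : ℕ → ℝ} (S : HomMoranStructure n c)

lemma delta_succ (k : ℕ) : moranDelta c (k+1) = moranDelta c k * c (k+1) := by
  unfold moranDelta
  rw [Finset.prod_Icc_succ_top (Nat.one_le_iff_ne_zero.mpr (Nat.succ_ne_zero k))]

lemma delta_pos (hc : ∀ k, 1 ≤ k → 0 < c k) (k : ℕ) : 0 < moranDelta c k :=
  Finset.prod_pos fun i hi => hc i (Finset.mem_Icc.mp hi).1

lemma diam_I : ∀ σ : List ℕ, MoranWord n σ → Metric.diam (S.I σ) = moranDelta c σ.length := by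
  intro σ
  induction σ using List.reverseRecOn with
  | nil =>
    intro _
    simp [S.root, Real.diam_Icc (by norm_num : (0:ℝ) ≤ 1), moranDelta]
  | append_singleton ρ i ih =>
    intro h
    obtain ⟨h1, h2⟩ := mw_last h
    have hp := mw_prefix h
    rw [S.ratio ρ hp i h1 h2, ih hp]
    simp [delta_succ, mul_comm]

lemma I_append_subset : ∀ τ σ : List ℕ, MoranWord n (σ ++ τ) → S.I (σ ++ τ) ⊆ S.I σ := by
  intro τ
  induction τ using List.reverseRecOn with
  | nil => intro σ h; simp
  | append_singleton ρ i ih =>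
    intro σ h
    rw [← List.append_assoc] at h ⊢
    obtain ⟨h1, h2⟩ := mw_last h
    exact le_trans (S.subset _ (mw_prefix h) i h1 h2) (ih σ (mw_prefix h))

end Lemmas

section Lemmas2
variable {n : ℕ → ℕ} {c : ℕ → ℝ} (S : HomMoranStructure n c)

lemma disj_words : ∀ (k : ℕ) (σ₁ σ₂ : List ℕ), σ₁.length = k → σ₂.length = k →
    MoranWord n σ₁ → MoranWord n σ₂ → σ₁ ≠ σ₂ →
    interior (S.I σ₁) ∩ interior (S.I σ₂) = ∅ := by
  intro k
  induction k with
  | zero =>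
    intro σ₁ σ₂ h1 h2 _ _ hne
    exact absurd (by rw [List.length_eq_zero_iff.mp h1, List.length_eq_zero_iff.mp h2]) hne
  | succ k ih =>
    intro σ₁ σ₂ h1 h2 hm1 hm2 hne
    rcases σ₁.eq_nil_or_concat with rfl | ⟨ρ₁, i₁, e₁⟩
    · exact absurd h1 (by simp)
    rw [List.concat_eq_append] at e₁; subst e₁
    rcases σ₂.eq_nil_or_concat with rfl | ⟨ρ₂, i₂, e₂⟩
    · exact absurd h2 (by simp)
    rw [List.concat_eq_append] at e₂; subst e₂
    simp only [List.length_append, List.length_cons, List.length_nil] at h1 h2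
    have hl1 : ρ₁.length = k := by omega
    have hl2 : ρ₂.length = k := by omega
    by_cases hρ : ρ₁ = ρ₂
    · subst hρ
      have hi : i₁ ≠ i₂ := fun h => hne (by rw [h])
      obtain ⟨hb1, hb2⟩ := mw_last hm1
      obtain ⟨hb3, hb4⟩ := mw_last hm2
      rcases lt_or_gt_of_ne hi with hlt | hgt
      · exact S.disj ρ₁ (mw_prefix hm1) i₁ i₂ hb1 hlt hb4
      · rw [Set.inter_comm]
        exact S.disj ρ₁ (mw_prefix hm1) i₂ i₁ hb3 hgt hb2
    · have hsub1 : S.I (ρ₁ ++ [i₁]) ⊆ S.I ρ₁ := I_append_subset S [i₁] ρ₁ hm1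
      have hsub2 : S.I (ρ₂ ++ [i₂]) ⊆ S.I ρ₂ := I_append_subset S [i₂] ρ₂ hm2
      have := ih ρ₁ ρ₂ hl1 hl2 (mw_prefix hm1) (mw_prefix hm2) hρ
      exact Set.eq_empty_of_subset_empty
        (this ▸ Set.inter_subset_inter (interior_mono hsub1) (interior_mono hsub2))

lemma I_nonempty_compact (σ : List ℕ) (h : MoranWord n σ) :
    (S.I σ).Nonempty ∧ IsCompact (S.I σ) ∧ IsClosed (S.I σ) := by
  obtain ⟨x, y, hxy, hI⟩ := S.isClosedInterval σ h
  exact ⟨hI ▸ Set.nonempty_Icc.mpr hxy, hI ▸ isCompact_Icc, hI ▸ isClosed_Icc⟩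

lemma exists_mem_moranSet_inter (hn : ∀ k, 1 ≤ k → 2 ≤ n k)
    (σ : List ℕ) (hσ : MoranWord n σ) :
    ∃ x, x ∈ moranSet S ∧ x ∈ S.I σ := by
  have hF : ∀ j, (fun j => S.I (σ ++ List.replicate j 1)) j = S.I (σ ++ List.replicate j 1) :=
    fun _ => rfl
  have hmw : ∀ j, MoranWord n (σ ++ List.replicate j 1) := mw_replicate hn σ hσ
  have hsub : ∀ j, S.I (σ ++ List.replicate (j+1) 1) ⊆ S.I (σ ++ List.replicate j 1) := by
    intro j
    have heq : σ ++ List.replicate (j+1) 1 = (σ ++ List.replicate j 1) ++ [1] := by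
      rw [List.replicate_succ', List.append_assoc]
    rw [heq]
    have h' : MoranWord n ((σ ++ List.replicate j 1) ++ [1]) := by rw [← heq]; exact hmw (j+1)
    exact I_append_subset S [1] _ h'
  obtain ⟨x, hx⟩ :=
    IsCompact.nonempty_iInter_of_sequence_nonempty_isCompact_isClosed
      (fun j => S.I (σ ++ List.replicate j 1)) hsub
      (fun j => (I_nonempty_compact S _ (hmw j)).1)
      ((I_nonempty_compact S _ (hmw 0)).2.1)
      (fun j => (I_nonempty_compact S _ (hmw j)).2.2)
  simp only [Set.mem_iInter] at hx
  have hx0 : x ∈ S.I σ := by simpa using hx 0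
  refine ⟨x, ?_, hx0⟩
  rw [moranSet]
  simp only [Set.mem_iInter, Set.mem_iUnion]
  intro k
  by_cases hk : k + 1 ≤ σ.length
  · refine ⟨σ.take (k+1), ⟨?_, by simp [hk]⟩, ?_⟩
    · have : σ.take (k+1) ++ σ.drop (k+1) = σ := List.take_append_drop _ _
      exact mw_prefix (this ▸ hσ)
    · have : σ.take (k+1) ++ σ.drop (k+1) = σ := List.take_append_drop _ _
      exact (this ▸ I_append_subset S (σ.drop (k+1)) (σ.take (k+1)) (this ▸ hσ)) hx0
  · refine ⟨σ ++ List.replicate (k+1-σ.length) 1, ⟨hmw _, by simp; omega⟩, hx _⟩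

end Lemmas2

/-- The finset of words extending `τ` by `j` more letters. -/
def moranWords (n : ℕ → ℕ) (τ : List ℕ) : ℕ → Finset (List ℕ)
  | 0 => {τ}
  | j+1 => (moranWords n τ j).biUnion fun ρ =>
      (Finset.Icc 1 (n (ρ.length + 1))).image fun i => ρ ++ [i]

section Lemmas3
variable {n : ℕ → ℕ}

lemma mem_moranWords_length {τ w : List ℕ} :
    ∀ {j}, w ∈ moranWords n τ j → w.length = τ.length + j := by
  intro j
  induction j generalizing w with
  | zero => intro h; simp [moranWords] at h; simp [h]
  | succ j ih =>
    intro h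
    simp only [moranWords, Finset.mem_biUnion, Finset.mem_image] at h
    obtain ⟨ρ, hρ, i, _, rfl⟩ := h
    simp [ih hρ]; omega

lemma mem_moranWords_prefix {τ w : List ℕ} :
    ∀ {j}, w ∈ moranWords n τ j → ∃ ρ : List ℕ, w = τ ++ ρ := by
  intro j
  induction j generalizing w with
  | zero => intro h; simp [moranWords] at h; exact ⟨[], by simp [h]⟩
  | succ j ih =>
    intro h
    simp only [moranWords, Finset.mem_biUnion, Finset.mem_image] at h
    obtain ⟨ρ, hρ, i, _, rfl⟩ := h
    obtain ⟨ρ', rfl⟩ := ih hρ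
    exact ⟨ρ' ++ [i], by simp⟩

lemma mem_moranWords_moran {τ w : List ℕ} (hτ : MoranWord n τ) :
    ∀ {j}, w ∈ moranWords n τ j → MoranWord n w := by
  intro j
  induction j generalizing w with
  | zero => intro h; simp [moranWords] at h; rwa [h]
  | succ j ih =>
    intro h
    simp only [moranWords, Finset.mem_biUnion, Finset.mem_image] at h
    obtain ⟨ρ, hρ, i, hi, rfl⟩ := h
    rw [Finset.mem_Icc] at hi
    exact mw_concat (ih hρ) hi.1 hi.2

lemma card_moranWords (hn : ∀ k, 1 ≤ k → 2 ≤ n k) (τ : List ℕ) :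
    ∀ j, (moranWords n τ j).card = ∏ i ∈ Finset.Icc (τ.length + 1) (τ.length + j), n i := by
  intro j
  induction j with
  | zero => simp [moranWords]
  | succ j ih =>
    have hdisj : ∀ x ∈ moranWords n τ j, ∀ y ∈ moranWords n τ j, x ≠ y →
        Disjoint ((Finset.Icc 1 (n (x.length + 1))).image fun i => x ++ [i])
          ((Finset.Icc 1 (n (y.length + 1))).image fun i => y ++ [i]) := by
      intro x hx y hy hxy
      simp only [Finset.disjoint_left, Finset.mem_image]
      rintro a ⟨i₁, _, rfl⟩ ⟨i₂, _, he⟩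
      have hlx := mem_moranWords_length hx
      have hly := mem_moranWords_length hy
      exact hxy ((List.append_inj he.symm (by omega)).1)
    rw [moranWords, Finset.card_biUnion hdisj]
    have hcard : ∀ ρ ∈ moranWords n τ j,
        ((Finset.Icc 1 (n (ρ.length + 1))).image fun i => ρ ++ [i]).card
          = n (τ.length + j + 1) := by
      intro ρ hρ
      rw [Finset.card_image_of_injective _ (fun i₁ i₂ h =>
        by simpa using List.append_cancel_left h), Nat.card_Icc, mem_moranWords_length hρ]
      omega
    rw [Finset.sum_congr rfl hcard, Finset.sum_const, ih, smul_eq_mul, mul_comm,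
      show τ.length + (j+1) = (τ.length + j) + 1 by omega,
      Finset.prod_Icc_succ_top (by omega : τ.length + 1 ≤ τ.length + j + 1)]
    ring

end Lemmas3

section Lemmas4
open MeasureTheory
variable {n : ℕ → ℕ} {c : ℕ → ℝ} (S : HomMoranStructure n c)

lemma card_le_six (hc : ∀ k, 1 ≤ k → 0 < c k) {L : ℕ} {z : ℝ} (T : Finset (List ℕ))
    (hT : ∀ w ∈ T, MoranWord n w ∧ w.length = L ∧
      (S.I w ∩ Metric.ball z (2 * moranDelta c L)).Nonempty) :
    T.card ≤ 6 := by
  set δ := moranDelta c L with hδdef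
  have hδ : 0 < δ := delta_pos hc L
  -- each interior is contained in the big interval and has measure ofReal δ
  have key : ∀ w ∈ T, interior (S.I w) ⊆ Set.Ioo (z - 3*δ) (z + 3*δ) ∧
      volume (interior (S.I w)) = ENNReal.ofReal δ := by
    intro w hw
    obtain ⟨hmw, hlen, y, hyI, hyz⟩ := hT w hw
    obtain ⟨a, b, hab, hI⟩ := S.isClosedInterval w hmw
    have hdiam : b - a = δ := by
      have := diam_I S w hmw
      rw [hI, Real.diam_Icc hab, hlen] at this
      exact this
    rw [hI] at hyI ⊢
    rw [interior_Icc]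
    have hy1 : a ≤ y ∧ y ≤ b := ⟨(Set.mem_Icc.mp hyI).1, (Set.mem_Icc.mp hyI).2⟩
    have hyz' : |y - z| < 2 * δ := by
      have := Metric.mem_ball.mp hyz
      rwa [Real.dist_eq] at this
    have habs := abs_lt.mp hyz'
    constructor
    · intro t ht
      obtain ⟨hta, htb⟩ := Set.mem_Ioo.mp ht
      constructor
      · nlinarith
      · nlinarith
    · rw [Real.volume_Ioo, hdiam]
  -- pairwise disjoint interiors
  have hdisj : (T : Set (List ℕ)).PairwiseDisjoint fun w => interior (S.I w) := by
    intro w₁ h₁ w₂ h₂ hne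
    obtain ⟨hm1, hl1, _⟩ := hT w₁ h₁
    obtain ⟨hm2, hl2, _⟩ := hT w₂ h₂
    exact Set.disjoint_iff_inter_eq_empty.mpr (disj_words S L w₁ w₂ hl1 hl2 hm1 hm2 hne)
  have hmeas : volume (⋃ w ∈ T, interior (S.I w)) = T.card * ENNReal.ofReal δ := by
    rw [measure_biUnion_finset hdisj (fun w _ => isOpen_interior.measurableSet)]
    rw [Finset.sum_congr rfl (fun w hw => (key w hw).2), Finset.sum_const, nsmul_eq_mul]
  have hle : volume (⋃ w ∈ T, interior (S.I w)) ≤ ENNReal.ofReal (6 * δ) := by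
    calc volume (⋃ w ∈ T, interior (S.I w)) ≤ volume (Set.Ioo (z - 3*δ) (z + 3*δ)) :=
          measure_mono (Set.iUnion₂_subset fun w hw => (key w hw).1)
      _ = ENNReal.ofReal (6 * δ) := by rw [Real.volume_Ioo]; ring_nf
  rw [hmeas] at hle
  have h6 : ENNReal.ofReal (6 * δ) = (6 : ℝ≥0∞) * ENNReal.ofReal δ := by
    rw [ENNReal.ofReal_mul (by norm_num : (0:ℝ) ≤ 6)]
    norm_num
  rw [h6] at hle
  have hδne : ENNReal.ofReal δ ≠ 0 := by simp [ENNReal.ofReal_eq_zero]; linarith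
  have := (ENNReal.mul_le_mul_iff_left hδne ENNReal.ofReal_ne_top).mp hle
  exact_mod_cast this
end Lemmas4

section Lemmas5

lemma exists_finset_of_coveringNumber_le {A : Set ℝ} {r X : ℝ} (hX : 0 ≤ X)
    (h : coveringNumber r A ≤ ENNReal.ofReal X) :
    ∃ Sb : Finset ℝ, (A ⊆ ⋃ y ∈ Sb, Metric.ball y r) ∧ (Sb.card : ℝ) ≤ X + 1 := by
  have hlt : coveringNumber r A < ENNReal.ofReal X + 1 :=
    lt_of_le_of_lt h (ENNReal.lt_add_right ENNReal.ofReal_ne_top one_ne_zero)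
  rw [_root_.coveringNumber] at hlt
  obtain ⟨m, ⟨Sb, hcard, hcov⟩, hmlt⟩ := sInf_lt_iff.mp hlt
  refine ⟨Sb, hcov, ?_⟩
  rw [← hcard] at hmlt
  have h2 : (Sb.card : ℝ≥0∞) < ENNReal.ofReal (X + 1) := by
    rwa [ENNReal.ofReal_add hX zero_le_one, ENNReal.ofReal_one]
  rw [← ENNReal.ofReal_natCast] at h2
  exact le_of_lt ((ENNReal.ofReal_lt_ofReal_iff (by linarith)).mp h2)

lemma coveringNumber_ball_inter_le (F : Set ℝ) (x r R : ℝ) (hr : 0 < r) (hrR : r < R) :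
    coveringNumber r (Metric.ball x R ∩ F) ≤ ENNReal.ofReal (4 * (R / r)) := by
  set J : ℕ := ⌊2 * R / r⌋₊ + 1 with hJ
  set Sb : Finset ℝ := (Finset.range J).image (fun j : ℕ => x - R + (j : ℝ) * r) with hSb
  have hR : 0 < R := lt_trans hr hrR
  have hcov : Metric.ball x R ∩ F ⊆ ⋃ y ∈ Sb, Metric.ball y r := by
    intro y hy
    have hyx : |y - x| < R := by
      have := Metric.mem_ball.mp hy.1
      rwa [Real.dist_eq] at this
    obtain ⟨hy1, hy2⟩ := abs_lt.mp hyx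
    set t : ℝ := y - x + R with ht
    have ht0 : 0 ≤ t := by linarith
    have ht2 : t < 2 * R := by linarith
    set j : ℕ := ⌊t / r⌋₊ with hj
    have hjm : j ∈ Finset.range J := by
      rw [Finset.mem_range, hJ]
      have : j ≤ ⌊2 * R / r⌋₊ := Nat.floor_le_floor ((div_le_div_iff_of_pos_right hr).mpr ht2.le)
      omega
    refine Set.mem_biUnion (Finset.mem_image_of_mem _ hjm) ?_
    rw [Metric.mem_ball, Real.dist_eq]
    have hjle : (j : ℝ) * r ≤ t := by
      have := Nat.floor_le (div_nonneg ht0 hr.le)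
      calc (j:ℝ) * r ≤ t / r * r := by nlinarith
        _ = t := div_mul_cancel₀ t hr.ne'
    have hjgt : t < ((j : ℝ) + 1) * r := by
      have := Nat.lt_floor_add_one (t / r)
      calc t = t / r * r := (div_mul_cancel₀ t hr.ne').symm
        _ < ((j:ℝ) + 1) * r := by nlinarith
    have : y - (x - R + j * r) = t - j * r := by ring
    rw [this, abs_lt]
    constructor <;> nlinarith
  have hcard : (Sb.card : ℝ) ≤ 4 * (R / r) := by
    have h1 : Sb.card ≤ J := le_trans (Finset.card_image_le) (by simp)
    have h2 : (J : ℝ) ≤ 2 * R / r + 1 := by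
      rw [hJ]
      push_cast
      have := Nat.floor_le (show (0:ℝ) ≤ 2*R/r from div_nonneg (by linarith) hr.le)
      linarith
    have h3 : (1:ℝ) ≤ R / r := (one_le_div hr).mpr hrR.le
    have : (Sb.card : ℝ) ≤ (J : ℝ) := by exact_mod_cast h1
    calc (Sb.card : ℝ) ≤ 2 * R / r + 1 := by linarith
      _ ≤ 4 * (R / r) := by
          rw [mul_div_assoc] at *
          linarith
  calc coveringNumber r (Metric.ball x R ∩ F) ≤ (Sb.card : ℝ≥0∞) :=
        sInf_le ⟨Sb, rfl, hcov⟩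
    _ ≤ ENNReal.ofReal (4 * (R / r)) := by
        rw [← ENNReal.ofReal_natCast]
        exact ENNReal.ofReal_le_ofReal hcard

end Lemmas5

section Lemmas6
variable {n : ℕ → ℕ} {c : ℕ → ℝ}

lemma c_le_half (hn : ∀ k, 1 ≤ k → 2 ≤ n k) (hc : ∀ k, 1 ≤ k → 0 < c k)
    (hnc : ∀ k, 1 ≤ k → (n k : ℝ) * c k < 1) {i : ℕ} (hi : 1 ≤ i) : c i ≤ 1/2 := by
  have h1 := hn i hi; have h2 := hc i hi; have h3 := hnc i hi
  have : (2:ℝ) ≤ (n i : ℝ) := by exact_mod_cast h1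
  nlinarith

lemma delta_le (hn : ∀ k, 1 ≤ k → 2 ≤ n k) (hc : ∀ k, 1 ≤ k → 0 < c k)
    (hnc : ∀ k, 1 ≤ k → (n k : ℝ) * c k < 1) (p : ℕ) :
    moranDelta c p ≤ (1/2:ℝ)^p := by
  have : moranDelta c p ≤ ∏ i ∈ Finset.Icc 1 p, (1/2:ℝ) := by
    apply Finset.prod_le_prod
    · exact fun i hi => (hc i (Finset.mem_Icc.mp hi).1).le
    · exact fun i hi => c_le_half hn hc hnc (Finset.mem_Icc.mp hi).1
  simpa [Nat.card_Icc] using this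

lemma delta_split (p L : ℕ) (hpL : p ≤ L) :
    moranDelta c L = moranDelta c p * ∏ i ∈ Finset.Icc (p+1) L, c i := by
  unfold moranDelta
  rw [show Finset.Icc 1 L = Finset.Ioc 0 L from Finset.Icc_add_one_left_eq_Ioc 0 L,
      show Finset.Icc 1 p = Finset.Ioc 0 p from Finset.Icc_add_one_left_eq_Ioc 0 p,
      show Finset.Icc (p+1) L = Finset.Ioc p L from Finset.Icc_add_one_left_eq_Ioc p L]
  exact (Finset.prod_Ioc_consecutive _ (Nat.zero_le p) hpL).symm

lemma neglog_prod_c_ge (hn : ∀ k, 1 ≤ k → 2 ≤ n k) (hc : ∀ k, 1 ≤ k → 0 < c k)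
    (hnc : ∀ k, 1 ≤ k → (n k : ℝ) * c k < 1) (a b : ℕ) (ha : 1 ≤ a) :
    ((Finset.Icc a b).card : ℝ) * Real.log 2 ≤ -Real.log (∏ i ∈ Finset.Icc a b, c i) := by
  have hsum : ∀ i ∈ Finset.Icc a b, Real.log 2 ≤ -Real.log (c i) := by
    intro i hi
    have h1 : 1 ≤ i := le_trans ha (Finset.mem_Icc.mp hi).1
    have := Real.log_le_log (hc i h1) (c_le_half hn hc hnc h1)
    rw [show (1:ℝ)/2 = 2⁻¹ by norm_num, Real.log_inv] at this
    linarith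
  calc ((Finset.Icc a b).card : ℝ) * Real.log 2
      = ∑ _i ∈ Finset.Icc a b, Real.log 2 := by rw [Finset.sum_const, nsmul_eq_mul]
    _ ≤ ∑ i ∈ Finset.Icc a b, -Real.log (c i) := Finset.sum_le_sum hsum
    _ = -Real.log (∏ i ∈ Finset.Icc a b, c i) := by
        rw [Real.log_prod
          (fun i hi => (hc i (le_trans ha (Finset.mem_Icc.mp hi).1)).ne')]
        rw [Finset.sum_neg_distrib]

lemma ratio_nonneg (hn : ∀ k, 1 ≤ k → 2 ≤ n k) (hc : ∀ k, 1 ≤ k → 0 < c k)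
    (hnc : ∀ k, 1 ≤ k → (n k : ℝ) * c k < 1) (k l : ℕ) :
    0 ≤ moranRatio n c (k+1) l := by
  unfold moranRatio
  apply div_nonneg
  · apply Real.log_nonneg
    have : ∏ _i ∈ Finset.Icc (k+1+1) (k+1+l), (1:ℝ) ≤
        ∏ i ∈ Finset.Icc (k+1+1) (k+1+l), (n i : ℝ) := by
      apply Finset.prod_le_prod (fun _ _ => by norm_num)
      intro i hi
      have := hn i (le_trans (by omega) (Finset.mem_Icc.mp hi).1)
      exact_mod_cast le_trans (by norm_num : (1:ℕ) ≤ 2) this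
    simpa using this
  · have h1 := neglog_prod_c_ge hn hc hnc (k+1+1) (k+1+l) (by omega)
    have h2 : (0:ℝ) ≤ ((Finset.Icc (k+1+1) (k+1+l)).card : ℝ) * Real.log 2 := by
      have := (Real.log_pos (by norm_num : (1:ℝ) < 2)).le
      positivity
    linarith

lemma ratio_le_one (hn : ∀ k, 1 ≤ k → 2 ≤ n k) (hc : ∀ k, 1 ≤ k → 0 < c k)
    (hnc : ∀ k, 1 ≤ k → (n k : ℝ) * c k < 1) (k l : ℕ) :
    moranRatio n c (k+1) l ≤ 1 := by
  unfold moranRatio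
  rcases Nat.eq_zero_or_pos l with rfl | hl
  · simp
  have hpos : ∀ i ∈ Finset.Icc (k+1+1) (k+1+l), (0:ℝ) < c i :=
    fun i hi => hc i (le_trans (by omega) (Finset.mem_Icc.mp hi).1)
  have hB : 0 < -Real.log (∏ i ∈ Finset.Icc (k+1+1) (k+1+l), c i) := by
    have := neglog_prod_c_ge hn hc hnc (k+1+1) (k+1+l) (by omega)
    have hcard : (Finset.Icc (k+1+1) (k+1+l)).card = l := by rw [Nat.card_Icc]; omega
    rw [hcard] at this
    have h2 : 0 < Real.log 2 := Real.log_pos (by norm_num)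
    have hl' : (1:ℝ) ≤ (l:ℝ) := by exact_mod_cast hl
    nlinarith
  rw [div_le_one hB]
  -- log ∏ n + log ∏ c ≤ 0  since ∏ (n c) ≤ 1
  have hPn : (0:ℝ) < ∏ i ∈ Finset.Icc (k+1+1) (k+1+l), (n i : ℝ) := by
    apply Finset.prod_pos
    intro i hi
    have := hn i (le_trans (by omega) (Finset.mem_Icc.mp hi).1)
    exact_mod_cast lt_of_lt_of_le (by norm_num : (0:ℕ) < 2) this
  have hPc : (0:ℝ) < ∏ i ∈ Finset.Icc (k+1+1) (k+1+l), c i := Finset.prod_pos hpos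
  have hprod : (∏ i ∈ Finset.Icc (k+1+1) (k+1+l), (n i : ℝ)) *
      (∏ i ∈ Finset.Icc (k+1+1) (k+1+l), c i) ≤ 1 := by
    rw [← Finset.prod_mul_distrib]
    apply Finset.prod_le_one
    · intro i hi
      have h1 : 1 ≤ i := le_trans (by omega) (Finset.mem_Icc.mp hi).1
      have := hc i h1
      positivity
    · intro i hi
      exact (hnc i (le_trans (by omega) (Finset.mem_Icc.mp hi).1)).le
  have := Real.log_le_log (by positivity) hprod
  rw [Real.log_mul hPn.ne' hPc.ne', Real.log_one] at this
  linarith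

end Lemmas6

section KeyBound
open Metric

set_option maxHeartbeats 2000000 in
lemma key_bound {n : ℕ → ℕ} {c : ℕ → ℝ} (S : HomMoranStructure n c)
    (hn : ∀ k, 1 ≤ k → 2 ≤ n k) (hc : ∀ k, 1 ≤ k → 0 < c k)
    (hnc : ∀ k, 1 ≤ k → (n k : ℝ) * c k < 1)
    {M : ℕ} (hM : ∀ k, 1 ≤ k → n k ≤ M)
    {s b C : ℝ} (hs : 0 ≤ s) (hb : 0 < b) (hC : 0 < C)
    (hcov : ∀ r R : ℝ, 0 < r → r < R → R < b → ∀ x ∈ moranSet S,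
      coveringNumber r (Metric.ball x R ∩ moranSet S) ≤ ENNReal.ofReal (C * (R / r) ^ s))
    {m : ℕ} (hm : 2 * (1/2:ℝ)^m < b)
    (k l : ℕ) (hl : m + 1 ≤ l) :
    moranRatio n c (k+1) l ≤
      s + (Real.log (6*C+6) + (m:ℝ) * Real.log M) / (((l:ℝ) - (m:ℝ)) * Real.log 2) := by
  have hM2 : 2 ≤ M := le_trans (hn 1 le_rfl) (hM 1 le_rfl)
  have hlog2 : (0:ℝ) < Real.log 2 := Real.log_pos (by norm_num)
  set p : ℕ := max (k+1) m with hp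
  set L : ℕ := k + 1 + l with hL
  have hp1 : k + 1 ≤ p := le_max_left _ _
  have hpm : m ≤ p := le_max_right _ _
  have hpk : p ≤ k + 1 + m := by omega
  have hpL : p < L := by omega
  have hδp : 0 < moranDelta c p := delta_pos hc p
  have hδL : 0 < moranDelta c L := delta_pos hc L
  set Q : ℝ := ∏ i ∈ Finset.Icc (p+1) L, c i with hQ
  have hQpos : 0 < Q :=
    Finset.prod_pos fun i hi => hc i (le_trans (by omega) (Finset.mem_Icc.mp hi).1)
  have hsplit : moranDelta c L = moranDelta c p * Q := delta_split p L hpL.le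
  have hQhalf : Q ≤ 1/2 := by
    have h1 : Q ≤ ∏ _i ∈ Finset.Icc (p+1) L, (1/2:ℝ) := by
      apply Finset.prod_le_prod
      · exact fun i hi => (hc i (le_trans (by omega) (Finset.mem_Icc.mp hi).1)).le
      · exact fun i hi => c_le_half hn hc hnc (le_trans (by omega) (Finset.mem_Icc.mp hi).1)
    rw [Finset.prod_const, Nat.card_Icc] at h1
    have hcard : L + 1 - (p + 1) = L - p := by omega
    rw [hcard] at h1
    calc Q ≤ (1/2:ℝ)^(L-p) := h1
      _ ≤ (1/2:ℝ)^1 := pow_le_pow_of_le_one (by norm_num) (by norm_num) (by omega)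
      _ = 1/2 := pow_one _
  set r : ℝ := 2 * moranDelta c L with hrdef
  set R : ℝ := 2 * moranDelta c p with hRdef
  have hr : 0 < r := by positivity
  have hrR : r < R := by rw [hrdef, hRdef, hsplit]; nlinarith
  have hRb : R < b := by
    have h1 : moranDelta c p ≤ (1/2:ℝ)^p := delta_le hn hc hnc p
    have h2 : (1/2:ℝ)^p ≤ (1/2:ℝ)^m := pow_le_pow_of_le_one (by norm_num) (by norm_num) hpm
    rw [hRdef]; nlinarith
  -- the word τ and a point x of E in I τ
  set τ : List ℕ := List.replicate p 1 with hτdef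
  have hτ : MoranWord n τ := by
    have := mw_replicate hn [] (mw_nil n) p
    rwa [List.nil_append] at this
  have hτlen : τ.length = p := List.length_replicate
  obtain ⟨x, hxE, hxI⟩ := exists_mem_moranSet_inter S hn τ hτ
  -- apply the covering hypothesis
  have hX0 : (0:ℝ) ≤ C * (R/r)^s := by positivity
  obtain ⟨Sb, hSbcov, hSbcard⟩ :=
    exists_finset_of_coveringNumber_le hX0 (hcov r R hr hrR hRb x hxE)
  -- the words of level L below τ
  set T : Finset (List ℕ) := moranWords n τ (L - p) with hT
  have hTlen : ∀ w ∈ T, w.length = L := by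
    intro w hw
    rw [mem_moranWords_length hw, hτlen]
    omega
  have hy : ∀ w ∈ T, ∃ yw, yw ∈ moranSet S ∧ yw ∈ S.I w :=
    fun w hw => exists_mem_moranSet_inter S hn w (mem_moranWords_moran hτ hw)
  choose! y hy1 hy2 using hy
  have hyball : ∀ w ∈ T, y w ∈ Metric.ball x R := by
    intro w hw
    obtain ⟨a0, b0, hab, hI⟩ := S.isClosedInterval τ hτ
    have hdiam : b0 - a0 = moranDelta c p := by
      have := diam_I S τ hτ
      rwa [hI, Real.diam_Icc hab, hτlen] at this
    have hywτ : y w ∈ S.I τ := by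
      obtain ⟨ρ, hρ⟩ := mem_moranWords_prefix hw
      have hmw : MoranWord n w := mem_moranWords_moran hτ hw
      have := I_append_subset S ρ τ (hρ ▸ hmw)
      exact this (hρ ▸ hy2 w hw)
    rw [hI] at hywτ hxI
    rw [Metric.mem_ball, Real.dist_eq, hRdef]
    obtain ⟨h1, h2⟩ := Set.mem_Icc.mp hywτ
    obtain ⟨h3, h4⟩ := Set.mem_Icc.mp hxI
    rw [abs_lt]
    constructor <;> nlinarith
  have hf : ∀ w ∈ T, ∃ z ∈ Sb, y w ∈ Metric.ball z r := by
    intro w hw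
    have := hSbcov ⟨hyball w hw, hy1 w hw⟩
    simpa using this
  choose! f hf1 hf2 using hf
  -- fibers have at most 6 elements
  have hfiber : ∀ z ∈ T.image f, (T.filter fun w => f w = z).card ≤ 6 := by
    intro z _
    apply card_le_six S hc (z := z)
    intro w hw
    rw [Finset.mem_filter] at hw
    refine ⟨mem_moranWords_moran hτ hw.1, hTlen w hw.1, y w, hy2 w hw.1, ?_⟩
    rw [← hw.2]
    exact hf2 w hw.1
  have hcount : T.card ≤ 6 * (T.image f).card := Finset.card_le_mul_card_image T 6 hfiber
  have himg : (T.image f).card ≤ Sb.card := by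
    apply Finset.card_le_card
    intro z hz
    obtain ⟨w, hw, rfl⟩ := Finset.mem_image.mp hz
    exact hf1 w hw
  have hcardT : T.card = ∏ i ∈ Finset.Icc (p+1) L, n i := by
    rw [hT, card_moranWords hn, hτlen]
    congr 1
    rw [Nat.add_sub_cancel' hpL.le]
  -- numeric bound : N ≤ (6C+6) (R/r)^s
  have hRr1 : (1:ℝ) ≤ R / r := (one_le_div hr).mpr hrR.le
  have hrpow1 : (1:ℝ) ≤ (R/r)^s := by
    calc (1:ℝ) = (R/r)^(0:ℝ) := (Real.rpow_zero _).symm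
      _ ≤ (R/r)^s := Real.rpow_le_rpow_of_exponent_le hRr1 hs
  have hNle : ((∏ i ∈ Finset.Icc (p+1) L, n i : ℕ) : ℝ) ≤ (6*C+6) * (R/r)^s := by
    have h1 : ((T.card : ℕ) : ℝ) ≤ 6 * (Sb.card : ℝ) := by
      have : (T.card : ℝ) ≤ 6 * ((T.image f).card : ℝ) := by exact_mod_cast hcount
      have h2 : ((T.image f).card : ℝ) ≤ (Sb.card : ℝ) := by exact_mod_cast himg
      linarith
    rw [hcardT] at h1
    calc ((∏ i ∈ Finset.Icc (p+1) L, n i : ℕ) : ℝ) ≤ 6 * (Sb.card : ℝ) := h1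
      _ ≤ 6 * (C * (R/r)^s + 1) := by linarith
      _ = 6 * C * (R/r)^s + 6 := by ring
      _ ≤ 6 * C * (R/r)^s + 6 * (R/r)^s := by nlinarith
      _ = (6*C+6) * (R/r)^s := by ring
  -- take logarithms
  have hNpos : (0:ℝ) < ((∏ i ∈ Finset.Icc (p+1) L, n i : ℕ) : ℝ) := by
    have : 0 < ∏ i ∈ Finset.Icc (p+1) L, n i := by
      apply Finset.prod_pos
      intro i hi
      have := hn i (le_trans (by omega) (Finset.mem_Icc.mp hi).1)
      omega
    exact_mod_cast this
  have hR0 : 0 < R := by rw [hRdef]; linarith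
  have hRrQ : R / r = 1 / Q := by
    have hr' : r = R * Q := by rw [hrdef, hRdef, hsplit]; ring
    rw [hr', div_mul_eq_div_div, div_self hR0.ne']
  have hlogRr : Real.log (R/r) = -Real.log Q := by
    rw [hRrQ, one_div, Real.log_inv]
  set B' : ℝ := -Real.log Q with hB'
  have hB'card : ((L - p : ℕ) : ℝ) * Real.log 2 ≤ B' := by
    have := neglog_prod_c_ge hn hc hnc (p+1) L (by omega)
    rwa [Nat.card_Icc, show L + 1 - (p+1) = L - p by omega] at this
  have hB'lb : ((l:ℝ) - (m:ℝ)) * Real.log 2 ≤ B' := by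
    have h1 : ((l:ℝ) - (m:ℝ)) ≤ ((L - p : ℕ) : ℝ) := by
      have : l - m ≤ L - p := by omega
      have h2 : ((l - m : ℕ) : ℝ) ≤ ((L - p : ℕ) : ℝ) := by exact_mod_cast this
      have h3 : ((l - m : ℕ) : ℝ) = (l:ℝ) - (m:ℝ) := by
        have : m ≤ l := by omega
        push_cast [this]; ring
      linarith
    nlinarith [hB'card]
  have hB'pos : 0 < B' := by
    have h4 : (0:ℝ) < (l:ℝ) - (m:ℝ) := by
      have : (m:ℝ) + 1 ≤ (l:ℝ) := by exact_mod_cast hl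
      linarith
    nlinarith [hB'lb]
  have hA2 : Real.log ((∏ i ∈ Finset.Icc (p+1) L, n i : ℕ) : ℝ) ≤
      Real.log (6*C+6) + s * B' := by
    have := Real.log_le_log hNpos hNle
    rwa [Real.log_mul (by positivity) (by positivity),
      Real.log_rpow (by linarith : (0:ℝ) < R/r), hlogRr] at this
  -- relate to the ratio
  have hsumA2 : Real.log ((∏ i ∈ Finset.Icc (p+1) L, n i : ℕ) : ℝ) =
      ∑ i ∈ Finset.Icc (p+1) L, Real.log (n i : ℝ) := by
    push_cast
    rw [Real.log_prod]
    intro i hi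
    have := hn i (le_trans (by omega) (Finset.mem_Icc.mp hi).1)
    have : (2:ℝ) ≤ (n i : ℝ) := by exact_mod_cast this
    linarith
  have hB'sum : B' = ∑ i ∈ Finset.Icc (p+1) L, (-Real.log (c i)) := by
    rw [hB', hQ, Real.log_prod
      (fun i hi => (hc i (le_trans (by omega) (Finset.mem_Icc.mp hi).1)).ne'),
      Finset.sum_neg_distrib]
  -- split the Icc (k+2) L ranges
  have hsplitIcc : ∀ g : ℕ → ℝ, ∑ i ∈ Finset.Icc (k+1+1) L, g i =
      ∑ i ∈ Finset.Icc (k+1+1) p, g i + ∑ i ∈ Finset.Icc (p+1) L, g i := by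
    intro g
    rw [show Finset.Icc (k+1+1) L = Finset.Ioc (k+1) L from Finset.Icc_add_one_left_eq_Ioc _ _,
      show Finset.Icc (k+1+1) p = Finset.Ioc (k+1) p from Finset.Icc_add_one_left_eq_Ioc _ _,
      show Finset.Icc (p+1) L = Finset.Ioc p L from Finset.Icc_add_one_left_eq_Ioc _ _]
    exact (Finset.sum_Ioc_consecutive _ hp1 hpL.le).symm
  set A : ℝ := Real.log (∏ i ∈ Finset.Icc (k+1+1) L, (n i : ℝ)) with hA
  set B : ℝ := -Real.log (∏ i ∈ Finset.Icc (k+1+1) L, c i) with hB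
  have hratio : moranRatio n c (k+1) l = A / B := by
    rw [moranRatio, hA, hB, hL]
  have hAsum : A = ∑ i ∈ Finset.Icc (k+1+1) L, Real.log (n i : ℝ) := by
    rw [hA, Real.log_prod]
    intro i hi
    have := hn i (le_trans (by omega) (Finset.mem_Icc.mp hi).1)
    have : (2:ℝ) ≤ (n i : ℝ) := by exact_mod_cast this
    linarith
  have hBsum : B = ∑ i ∈ Finset.Icc (k+1+1) L, (-Real.log (c i)) := by
    rw [hB, Real.log_prod
      (fun i hi => (hc i (le_trans (by omega) (Finset.mem_Icc.mp hi).1)).ne'),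
      Finset.sum_neg_distrib]
  have hlogM0 : (0:ℝ) ≤ Real.log M := Real.log_nonneg (by exact_mod_cast le_trans one_le_two hM2)
  have hA1 : ∑ i ∈ Finset.Icc (k+1+1) p, Real.log (n i : ℝ) ≤ (m:ℝ) * Real.log M := by
    have h1 : ∑ i ∈ Finset.Icc (k+1+1) p, Real.log (n i : ℝ) ≤
        ∑ _i ∈ Finset.Icc (k+1+1) p, Real.log M := by
      apply Finset.sum_le_sum
      intro i hi
      have hi1 : 1 ≤ i := le_trans (by omega) (Finset.mem_Icc.mp hi).1
      have h2 := hn i hi1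
      apply Real.log_le_log (by exact_mod_cast lt_of_lt_of_le two_pos h2)
      exact_mod_cast hM i hi1
    rw [Finset.sum_const, nsmul_eq_mul, Nat.card_Icc] at h1
    have hcard : ((p + 1 - (k+1+1) : ℕ) : ℝ) ≤ (m:ℝ) := by
      have : p + 1 - (k+1+1) ≤ m := by omega
      exact_mod_cast this
    nlinarith
  have hB1 : 0 ≤ ∑ i ∈ Finset.Icc (k+1+1) p, (-Real.log (c i)) := by
    apply Finset.sum_nonneg
    intro i hi
    have hi1 : 1 ≤ i := le_trans (by omega) (Finset.mem_Icc.mp hi).1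
    have := Real.log_le_log (hc i hi1) (le_trans (c_le_half hn hc hnc hi1) (show (1:ℝ)/2 ≤ 1 by norm_num))
    simp at this
    linarith
  have hBgeB' : B' ≤ B := by
    rw [hBsum, hsplitIcc, ← hB'sum]
    linarith
  have hBpos : 0 < B := lt_of_lt_of_le hB'pos hBgeB'
  set K : ℝ := Real.log (6*C+6) + (m:ℝ) * Real.log M with hK
  have hK0 : 0 ≤ K := by
    have : (0:ℝ) ≤ Real.log (6*C+6) := Real.log_nonneg (by linarith)
    have : (0:ℝ) ≤ (m:ℝ) * Real.log M := by positivity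
    rw [hK]; linarith [Real.log_nonneg (show (1:ℝ) ≤ 6*C+6 by linarith)]
  have hAle : A ≤ s * B + K := by
    rw [hAsum, hsplitIcc, ← hsumA2]
    have h1 : s * B' ≤ s * B := by nlinarith
    calc ∑ i ∈ Finset.Icc (k+1+1) p, Real.log (n i : ℝ) +
          Real.log ((∏ i ∈ Finset.Icc (p+1) L, n i : ℕ) : ℝ)
        ≤ (m:ℝ) * Real.log M + (Real.log (6*C+6) + s * B') := by linarith
      _ ≤ s * B + K := by rw [hK]; linarith
  rw [hratio, div_le_iff₀ hBpos]
  have hml : (m:ℝ) + 1 ≤ (l:ℝ) := by exact_mod_cast hl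
  have hd : 0 < ((l:ℝ) - (m:ℝ)) * Real.log 2 := by
    have h0 : 0 < (l:ℝ) - (m:ℝ) := by linarith
    exact mul_pos h0 hlog2
  have hKB : K / B ≤ K / (((l:ℝ) - (m:ℝ)) * Real.log 2) :=
    div_le_div_of_nonneg_left hK0 hd (le_trans hB'lb hBgeB')
  calc A ≤ s * B + K := hAle
    _ = s * B + (K / B) * B := by rw [div_mul_cancel₀ K hBpos.ne']
    _ ≤ s * B + (K / (((l:ℝ) - (m:ℝ)) * Real.log 2)) * B := by
        have := mul_le_mul_of_nonneg_right hKB hBpos.le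
        linarith
    _ = (s + K / (((l:ℝ) - (m:ℝ)) * Real.log 2)) * B := by ring

end KeyBound

/-- If `E` is a homogeneous Moran set with `sup_k n_k < ∞`, then
`dim_A E ≥ limsup_{l→∞} sup_{k≥1} log(n_{k+1}⋯n_{k+l}) / (−log(c_{k+1}⋯c_{k+l}))`. -/
theorem assouadDim_homMoran_ge (n : ℕ → ℕ) (c : ℕ → ℝ)
    (hn : ∀ k, 1 ≤ k → 2 ≤ n k) (hc : ∀ k, 1 ≤ k → 0 < c k)
    (hnc : ∀ k, 1 ≤ k → (n k : ℝ) * c k < 1)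
    (S : HomMoranStructure n c) (E : Set ℝ) (hE : E = moranSet S)
    (hsup : ∃ M : ℕ, ∀ k, 1 ≤ k → n k ≤ M) :
    Filter.limsup (fun l : ℕ => ⨆ k : ℕ, moranRatio n c (k + 1) l) Filter.atTop ≤
      assouadDim E := by
  subst hE
  obtain ⟨M, hM⟩ := hsup
  have hlog2 : (0:ℝ) < Real.log 2 := Real.log_pos (by norm_num)
  have hbdd : ∀ l, BddAbove (Set.range fun k => moranRatio n c (k+1) l) := by
    intro l
    exact ⟨1, by rintro _ ⟨k, rfl⟩; exact ratio_le_one hn hc hnc k l⟩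
  have hu0 : ∀ l : ℕ, 0 ≤ ⨆ k : ℕ, moranRatio n c (k+1) l := fun l =>
    le_trans (ratio_nonneg hn hc hnc 0 l) (le_ciSup (hbdd l) 0)
  -- s = 1 belongs to the defining set
  have hone : (1:ℝ) ∈ {s : ℝ | 0 ≤ s ∧ ∃ b > (0 : ℝ), ∃ C > (0 : ℝ),
      ∀ r R : ℝ, 0 < r → r < R → R < b → ∀ x ∈ moranSet S,
      coveringNumber r (Metric.ball x R ∩ moranSet S) ≤ ENNReal.ofReal (C * (R / r) ^ s)} := by
    refine ⟨zero_le_one, 1, one_pos, 4, by norm_num, fun r R hr hrR _ x _ => ?_⟩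
    have := coveringNumber_ball_inter_le (moranSet S) x r R hr hrR
    rwa [show (4:ℝ) * (R/r) = 4 * (R/r)^(1:ℝ) by rw [Real.rpow_one]] at this
  rw [assouadDim]
  apply le_csInf ⟨1, hone⟩
  rintro s ⟨hs, b, hb, C, hC, hcov⟩
  -- choose m with 2 * (1/2)^m < b
  obtain ⟨m, hm⟩ : ∃ m : ℕ, (1/2:ℝ)^m < b/2 := by
    rcases exists_pow_lt_of_lt_one (by linarith : (0:ℝ) < b/2)
      (by norm_num : (1/2:ℝ) < 1) with ⟨m, hm⟩
    exact ⟨m, hm⟩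
  have hm' : 2 * (1/2:ℝ)^m < b := by linarith
  set K : ℝ := Real.log (6*C+6) + (m:ℝ) * Real.log M with hK
  have hM2 : 2 ≤ M := le_trans (hn 1 le_rfl) (hM 1 le_rfl)
  have hK0 : 0 ≤ K := by
    have h1 : (0:ℝ) ≤ Real.log (6*C+6) := Real.log_nonneg (by linarith)
    have h2 : (0:ℝ) ≤ (m:ℝ) * Real.log M := by
      have : (0:ℝ) ≤ Real.log M :=
        Real.log_nonneg (by exact_mod_cast le_trans one_le_two hM2)
      positivity
    rw [hK]; linarith
  have hcb : Filter.IsCoboundedUnder (· ≤ ·) Filter.atTop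
      (fun l : ℕ => ⨆ k : ℕ, moranRatio n c (k+1) l) := by
    apply Filter.IsBoundedUnder.isCoboundedUnder_le
    exact ⟨0, Filter.eventually_map.mpr (Filter.Eventually.of_forall hu0)⟩
  apply le_of_forall_pos_le_add
  intro ε hε
  apply Filter.limsup_le_of_le hcb
  rw [Filter.eventually_atTop]
  refine ⟨m + 1 + ⌈K / (ε * Real.log 2)⌉₊, fun l hl => ?_⟩
  have hl1 : m + 1 ≤ l := by omega
  have hkey : ∀ k : ℕ, moranRatio n c (k+1) l ≤
      s + K / (((l:ℝ) - (m:ℝ)) * Real.log 2) := fun k =>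
    key_bound S hn hc hnc hM hs hb hC hcov hm' k l hl1
  have hεb : K / (((l:ℝ) - (m:ℝ)) * Real.log 2) ≤ ε := by
    have hml : (m:ℝ) + 1 + (⌈K / (ε * Real.log 2)⌉₊ : ℝ) ≤ (l:ℝ) := by exact_mod_cast hl
    have hd : 0 < ((l:ℝ) - (m:ℝ)) * Real.log 2 := by
      have : 0 < (l:ℝ) - (m:ℝ) := by
        have : (0:ℝ) ≤ (⌈K / (ε * Real.log 2)⌉₊ : ℝ) := Nat.cast_nonneg _
        linarith
      exact mul_pos this hlog2
    rw [div_le_iff₀ hd]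
    have hceil : K / (ε * Real.log 2) ≤ (⌈K / (ε * Real.log 2)⌉₊ : ℝ) := Nat.le_ceil _
    have h1 : K / (ε * Real.log 2) ≤ (l:ℝ) - (m:ℝ) := by linarith
    have h2 : K ≤ ((l:ℝ) - (m:ℝ)) * (ε * Real.log 2) := by
      rw [div_le_iff₀ (by positivity)] at h1
      linarith
    calc K ≤ ((l:ℝ) - (m:ℝ)) * (ε * Real.log 2) := h2
      _ = ε * (((l:ℝ) - (m:ℝ)) * Real.log 2) := by ring
  exact ciSup_le fun k => le_trans (hkey k) (by linarith)
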